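/- Let t > 0 and x, y, u, v ∈ ℝ^n with u ∈ prox_{t‖·‖₀}(x) and v ∈ prox_{t‖·‖₀}(y). If supp(u) ≠ supp(v), then ‖u − v‖₂ ≥ √(2t). -/

import Mathlib

noncomputable section

/-- The `ℓ₀` "norm": the number of nonzero components, as a real number. -/
def l0 {n : ℕ} (u : EuclideanSpace ℝ (Fin n)) : ℝ := ({i : Fin n | u i ≠ 0}).ncard

/-- The support of a vector. -/
def supp {n : ℕ} (u : EuclideanSpace ℝ (Fin n)) : Set (Fin n) := {i | u i ≠ 0}

/-- Membership `x ∈ prox_{t‖·‖₀}(y)`. -/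
def InProxL0 {n : ℕ} (t : ℝ) (x y : EuclideanSpace ℝ (Fin n)) : Prop :=
  ∀ z : EuclideanSpace ℝ (Fin n),
    (1 / (2 * t)) * ‖x - y‖ ^ 2 + l0 x ≤ (1 / (2 * t)) * ‖z - y‖ ^ 2 + l0 z

/-! Comparing a prox point `u` of `x` with the vectors obtained by changing one coordinate `i`
in the support of `u`: setting `uᵢ := xᵢ` cannot enlarge the support, so optimality forces
`uᵢ = xᵢ`; setting `uᵢ := 0` saves one in `‖·‖₀` at quadratic cost `xᵢ² / (2t)`, so `uᵢ² ≥ 2t`.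
At a coordinate where exactly one of `u`, `v` vanishes, `|uᵢ - vᵢ| ≥ √(2t)` follows. -/

open Function

theorem EuclideanSpace.norm_sub_sq_update_add {ι : Type*} [Fintype ι] [DecidableEq ι]
    (u x : EuclideanSpace ℝ ι) (i : ι) (c : ℝ) :
    ‖WithLp.toLp 2 (update u i c) - x‖ ^ 2 + (u i - x i) ^ 2 = ‖u - x‖ ^ 2 + (c - x i) ^ 2 := by
  simp only [EuclideanSpace.real_norm_sq_eq, PiLp.sub_apply]
  rw [← Finset.add_sum_erase _ _ (Finset.mem_univ i),
    ← Finset.add_sum_erase _ _ (Finset.mem_univ i),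
    Finset.sum_congr rfl fun j hj => by rw [update_of_ne (Finset.ne_of_mem_erase hj)]]
  simp only [update_self]
  ring

section L0

variable {n : ℕ} (u : EuclideanSpace ℝ (Fin n)) {i : Fin n}

theorem l0_update_le (hi : u i ≠ 0) (c : ℝ) : l0 (WithLp.toLp 2 (update u i c)) ≤ l0 u := by
  refine Nat.cast_le.mpr (Set.ncard_le_ncard (fun j hj => ?_) (Set.toFinite _))
  by_cases hji : j = i
  · simpa [hji] using hi
  · simpa [hji] using hj

theorem l0_update_zero_add_one (hi : u i ≠ 0) : l0 (WithLp.toLp 2 (update u i 0)) + 1 = l0 u := by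
  unfold l0
  have hsupp : {j | WithLp.toLp 2 (update u i 0) j ≠ 0} = {j | u j ≠ 0} \ {i} := by
    ext j
    by_cases hji : j = i <;> simp [hji]
  rw [hsupp]
  exact_mod_cast Set.ncard_sdiff_singleton_add_one (s := {j | u j ≠ 0}) hi

end L0

namespace InProxL0

variable {n : ℕ} {t : ℝ} {u x : EuclideanSpace ℝ (Fin n)}

theorem sq_sub_apply_le (hu : InProxL0 t u x) (ht : 0 < t) (i : Fin n) (c : ℝ) :
    (u i - x i) ^ 2 + 2 * t * l0 u ≤
      (c - x i) ^ 2 + 2 * t * l0 (WithLp.toLp 2 (update u i c)) := by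
  have hopt := hu (WithLp.toLp 2 (update u i c))
  have hnorm := EuclideanSpace.norm_sub_sq_update_add u x i c
  have hmul := mul_le_mul_of_nonneg_left hopt (by positivity : (0 : ℝ) ≤ 2 * t)
  field_simp at hmul
  linarith

theorem apply_eq_of_ne_zero {i : Fin n} (hu : InProxL0 t u x) (ht : 0 < t) (hi : u i ≠ 0) :
    u i = x i := by
  have := hu.sq_sub_apply_le ht i (x i)
  have := l0_update_le u hi (x i)
  nlinarith [sq_nonneg (u i - x i)]

theorem two_mul_le_sq_apply {i : Fin n} (hu : InProxL0 t u x) (ht : 0 < t) (hi : u i ≠ 0) :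
    2 * t ≤ u i ^ 2 := by
  have hopt := hu.sq_sub_apply_le ht i 0
  rw [← l0_update_zero_add_one u hi, ← hu.apply_eq_of_ne_zero ht hi] at hopt
  linarith

theorem sqrt_two_mul_le_abs_apply {i : Fin n} (hu : InProxL0 t u x) (ht : 0 < t) (hi : u i ≠ 0) :
    √(2 * t) ≤ |u i| := by
  rw [← Real.sqrt_sq_eq_abs]
  exact Real.sqrt_le_sqrt (hu.two_mul_le_sq_apply ht hi)

end InProxL0

/-- If `t > 0`, `u ∈ prox_{t‖·‖₀}(x)`, `v ∈ prox_{t‖·‖₀}(y)` and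
`supp(u) ≠ supp(v)`, then `‖u − v‖₂ ≥ √(2t)`. -/
theorem stmt11 (n : ℕ) (t : ℝ) (ht : 0 < t)
    (x y u v : EuclideanSpace ℝ (Fin n))
    (hu : InProxL0 t u x) (hv : InProxL0 t v y)
    (hsupp : supp u ≠ supp v) :
    Real.sqrt (2 * t) ≤ ‖u - v‖ := by
  obtain ⟨i, hi⟩ : ∃ i, (u i ≠ 0 ∧ v i = 0) ∨ (v i ≠ 0 ∧ u i = 0) := by
    by_contra! h
    exact hsupp (Set.ext fun i => ⟨(h i).1, (h i).2⟩)
  calc √(2 * t) ≤ |u i - v i| := by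
        rcases hi with ⟨hui, hvi⟩ | ⟨hvi, hui⟩
        · simpa [hvi] using hu.sqrt_two_mul_le_abs_apply ht hui
        · simpa [hui] using hv.sqrt_two_mul_le_abs_apply ht hvi
    _ = ‖(u - v) i‖ := by simp
    _ ≤ ‖u - v‖ := PiLp.norm_apply_le _ i

end
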